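/- arXiv:1603.06088 — 6 statements merged into one kernel-verified Lean document; each statement's English description precedes it below -/
import Mathlib

section
/- Let E ⊆ ℝⁿ be a measurable set with locally finite s-perimeter for some s ∈ (0,1), and let Ω ⊆ ℝⁿ be an open set. If ∂⁻E ∩ Ω ≠ ∅, then P_s^L(E,Ω) > 0. -/
open MeasureTheory Metric Set Filter Bornology
open scoped ENNReal Topology

/-- The fractional kernel `|x-y|^{-(n+s)}` as an extended nonnegative real. -/
noncomputable def fracKer (n : ℕ) (s : ℝ) (x y : EuclideanSpace ℝ (Fin n)) : ℝ≥0∞ :=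
  ENNReal.ofReal (‖x - y‖ ^ (-((n : ℝ) + s)))

/-- The interaction `L_s(A,B) = ∫_A ∫_B |x-y|^{-(n+s)} dy dx`. -/
noncomputable def interL (n : ℕ) (s : ℝ) (A B : Set (EuclideanSpace ℝ (Fin n))) : ℝ≥0∞ :=
  ∫⁻ x in A, ∫⁻ y in B, fracKer n s x y

/-- The local part of the `s`-fractional perimeter of `E` in `Ω`. -/
noncomputable def perL (n : ℕ) (s : ℝ) (E Ω : Set (EuclideanSpace ℝ (Fin n))) : ℝ≥0∞ :=
  interL n s (E ∩ Ω) (Eᶜ ∩ Ω)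

/-- The nonlocal part of the `s`-fractional perimeter of `E` in `Ω`. -/
noncomputable def perNL (n : ℕ) (s : ℝ) (E Ω : Set (EuclideanSpace ℝ (Fin n))) : ℝ≥0∞ :=
  interL n s (E ∩ Ω) (Eᶜ \ Ω) + interL n s (E \ Ω) (Eᶜ ∩ Ω)

/-- The `s`-fractional perimeter of `E` in `Ω`. -/
noncomputable def per (n : ℕ) (s : ℝ) (E Ω : Set (EuclideanSpace ℝ (Fin n))) : ℝ≥0∞ :=
  interL n s (E ∩ Ω) (Eᶜ ∩ Ω) + interL n s (E ∩ Ω) (Eᶜ \ Ω) + interL n s (E \ Ω) (Eᶜ ∩ Ω)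

/-- The global `s`-fractional perimeter `P_s(E) = L_s(E, Eᶜ)`. -/
noncomputable def perG (n : ℕ) (s : ℝ) (E : Set (EuclideanSpace ℝ (Fin n))) : ℝ≥0∞ :=
  interL n s E Eᶜ

/-- The measure theoretic boundary `∂⁻E`. Note `volume (ball x r) = ω_n rⁿ`. -/
def mtb (n : ℕ) (E : Set (EuclideanSpace ℝ (Fin n))) : Set (EuclideanSpace ℝ (Fin n)) :=
  {x | ∀ r > (0 : ℝ), 0 < volume (E ∩ ball x r) ∧ volume (E ∩ ball x r) < volume (ball x r)}

/-- `E` has locally finite `s`-perimeter: finite `s`-perimeter in every bounded open set. -/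
def locFinPer (n : ℕ) (s : ℝ) (E : Set (EuclideanSpace ℝ (Fin n))) : Prop :=
  ∀ Ω : Set (EuclideanSpace ℝ (Fin n)), IsOpen Ω → IsBounded Ω → per n s E Ω < ⊤

/-!
The kernel `|x - y|^{-(n+s)}` is positive off the diagonal, so `L_s(A, B) > 0` for disjoint sets
`A`, `B` of positive measure. A point of `∂⁻E ∩ Ω` is the centre of a ball
inside `Ω` in which both `E` and `Eᶜ` have positive measure, and `L_s` is monotone in both sets.
-/

lemma setLIntegral_pos_of_forall_pos {α : Type*} [MeasurableSpace α] {μ : Measure α}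
    {f : α → ℝ≥0∞} (hf : Measurable f) {t : Set α} (hpos : ∀ x ∈ t, 0 < f x) (ht : 0 < μ t) :
    0 < ∫⁻ x in t, f x ∂μ := by
  have hsupp : Function.support f ∩ t = t := inter_eq_right.mpr fun x hx => (hpos x hx).ne'
  rwa [setLIntegral_pos_iff hf, hsupp]

section FractionalPerimeter

variable {n : ℕ} {s : ℝ} {A A' B B' E Ω : Set (EuclideanSpace ℝ (Fin n))}
  {x : EuclideanSpace ℝ (Fin n)}

lemma measurable_fracKer_uncurry : Measurable (Function.uncurry (fracKer n s)) := by
  unfold fracKer Function.uncurry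
  fun_prop

lemma fracKer_pos {y : EuclideanSpace ℝ (Fin n)} (hxy : x ≠ y) : 0 < fracKer n s x y :=
  ENNReal.ofReal_pos.mpr (Real.rpow_pos_of_pos (norm_pos_iff.mpr (sub_ne_zero.mpr hxy)) _)

lemma interL_mono (hA : A ⊆ A') (hB : B ⊆ B') : interL n s A B ≤ interL n s A' B' :=
  (lintegral_mono_set hA).trans (lintegral_mono fun _ => lintegral_mono_set hB)

lemma interL_pos_of_disjoint (hAB : Disjoint A B) (hA : 0 < volume A) (hB : 0 < volume B) :
    0 < interL n s A B := by
  have hinner : ∀ x ∈ A, 0 < ∫⁻ y in B, fracKer n s x y := fun x hx =>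
    setLIntegral_pos_of_forall_pos (measurable_fracKer_uncurry.comp measurable_prodMk_left)
      (fun y hy => fracKer_pos (hAB.ne_of_mem hx hy)) hB
  exact setLIntegral_pos_of_forall_pos measurable_fracKer_uncurry.lintegral_prod_right' hinner hA

lemma volume_compl_inter_ball_pos (hx : x ∈ mtb n E) {r : ℝ} (hr : 0 < r) :
    0 < volume (Eᶜ ∩ ball x r) := by
  have hsplit : volume (ball x r) ≤ volume (E ∩ ball x r) + volume (Eᶜ ∩ ball x r) :=
    calc volume (ball x r) = volume (E ∩ ball x r ∪ Eᶜ ∩ ball x r) := by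
          rw [← union_inter_distrib_right, union_compl_self, univ_inter]
      _ ≤ _ := measure_union_le _ _
  refine pos_iff_ne_zero.mpr fun h0 => ?_
  rw [h0, add_zero] at hsplit
  exact (hx r hr).2.not_ge hsplit

lemma perL_pos_of_mem_mtb_of_ball_subset (hx : x ∈ mtb n E) {r : ℝ} (hr : 0 < r)
    (hball : ball x r ⊆ Ω) : 0 < perL n s E Ω :=
  calc 0 < interL n s (E ∩ ball x r) (Eᶜ ∩ ball x r) :=
        interL_pos_of_disjoint (disjoint_compl_right.mono inter_subset_left inter_subset_left)
          (hx r hr).1 (volume_compl_inter_ball_pos hx hr)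
    _ ≤ perL n s E Ω :=
        interL_mono (inter_subset_inter_right _ hball) (inter_subset_inter_right _ hball)

end FractionalPerimeter

theorem perL_pos_of_mtBoundary_inter_nonempty_general (n : ℕ) (s : ℝ)
    (E : Set (EuclideanSpace ℝ (Fin n)))
    (Ω : Set (EuclideanSpace ℝ (Fin n))) (hΩ : IsOpen Ω)
    (hne : (mtb n E ∩ Ω).Nonempty) :
    0 < perL n s E Ω := by
  obtain ⟨x, hx, hxΩ⟩ := hne
  obtain ⟨r, hr, hball⟩ := Metric.isOpen_iff.mp hΩ x hxΩ
  exact perL_pos_of_mem_mtb_of_ball_subset hx hr hball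

/-- If `E` has locally finite `s`-perimeter and the measure theoretic
boundary of `E` meets the open set `Ω`, then the local `s`-perimeter of `E` in `Ω`
is positive. -/
theorem perL_pos_of_mtBoundary_inter_nonempty (n : ℕ) (hn : 1 ≤ n) (s : ℝ)
    (hs : s ∈ Set.Ioo (0 : ℝ) 1) (E : Set (EuclideanSpace ℝ (Fin n))) (hE : MeasurableSet E)
    (hloc : locFinPer n s E) (Ω : Set (EuclideanSpace ℝ (Fin n))) (hΩ : IsOpen Ω)
    (hne : (mtb n E ∩ Ω).Nonempty) :
    0 < perL n s E Ω :=
  perL_pos_of_mtBoundary_inter_nonempty_general n s E Ω hΩ hne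
end

section
/- Let Ω ⊆ ℝⁿ be a bounded open set, E ⊆ ℝⁿ a measurable set with topological boundary ∂E, and s ∈ (0,1). Then 2 P_s^L(E,Ω) ≤ n ω_n ∫_0^∞ |N̄_ρ^Ω(∂E)| ρ^{−(1+s)} dρ, where ω_n is the Lebesgue measure of the unit ball of ℝⁿ. -/
/-!
For `x ∈ E ∩ Ω` and `y ∈ Eᶜ ∩ Ω` the closed ball `B̄(x, |x - y|)` is connected and meets both `E`
and `Eᶜ`, hence meets `∂E`; so `|x - y| ≥ d(x) := dist(x, ∂E)`. The inner integral of the kernel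
over `Eᶜ ∩ Ω` is therefore at most its integral over `{|x - y| ≥ d(x)}`, which in polar
coordinates is `n ω_n ∫_{d(x)}^∞ ρ^{-(1+s)} dρ`. Integrating over `x ∈ E ∩ Ω` and exchanging
the integrals gives `n ω_n ∫_0^∞ |{x ∈ E ∩ Ω : d(x) ≤ ρ}| ρ^{-(1+s)} dρ`. The same bound with
`E` and `Eᶜ` exchanged bounds the other half of `2 P_s^L(E, Ω)`, and the two neighbourhoods add
up to `N̄_ρ^Ω(∂E)`.
-/

open MeasureTheory Metric Set Filter Bornology
open scoped ENNReal Topology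

/-- The closed `ρ`-neighborhood of `Γ` relative to `Ω`: `{x ∈ Ω : dist(x,Γ) ≤ ρ}`. -/
def clNbd (n : ℕ) (ρ : ℝ) (Γ Ω : Set (EuclideanSpace ℝ (Fin n))) :
    Set (EuclideanSpace ℝ (Fin n)) :=
  {x ∈ Ω | Metric.infDist x Γ ≤ ρ}

/-- The upper `r`-dimensional Minkowski content of `Γ` relative to `Ω`:
`limsup_{ρ→0⁺} |N̄_ρ^Ω(Γ)| / ρ^{n-r}`. -/
noncomputable def upMinkContent (n : ℕ) (r : ℝ) (Γ Ω : Set (EuclideanSpace ℝ (Fin n))) : ℝ≥0∞ :=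
  Filter.limsup (fun ρ : ℝ => volume (clNbd n ρ Γ Ω) / ENNReal.ofReal (ρ ^ ((n : ℝ) - r)))
    (𝓝[>] 0)

/-- The upper Minkowski dimension of `Γ` relative to `Ω`:
`sup {r ∈ [0,n] : M̄^r(Γ,Ω) = ∞}`. -/
noncomputable def upMinkDim (n : ℕ) (Γ Ω : Set (EuclideanSpace ℝ (Fin n))) : ℝ :=
  sSup {r : ℝ | r ∈ Set.Icc (0 : ℝ) n ∧ upMinkContent n r Γ Ω = ⊤}

theorem IsPreconnected.inter_frontier_nonempty {X : Type*} [TopologicalSpace X] {s t : Set X}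
    (hs : IsPreconnected s) (hst : (s ∩ t).Nonempty) (hst' : (s \ t).Nonempty) :
    (s ∩ frontier t).Nonempty := by
  by_contra h
  have hsub : s ⊆ interior t ∪ interior tᶜ := by
    rw [← compl_frontier_eq_union_interior]
    exact fun x hxs hxt => h ⟨x, hxs, hxt⟩
  have hdisj : Disjoint (interior t) (interior tᶜ) :=
    disjoint_compl_right.mono interior_subset interior_subset
  obtain ⟨x, hxs, hxt⟩ := hst
  obtain ⟨y, hys, hyt⟩ := hst'
  rcases hs.subset_or_subset isOpen_interior isOpen_interior hdisj hsub with hint | hcompl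
  · exact hyt (interior_subset (hint hys))
  · exact interior_subset (hcompl hxs) hxt

theorem infDist_frontier_le_dist {E : Type*} [NormedAddCommGroup E] [NormedSpace ℝ E]
    {V : Set E} {x y : E} (hx : x ∈ V) (hy : y ∉ V) :
    infDist x (frontier V) ≤ dist x y := by
  obtain ⟨z, hz, hzV⟩ := isPreconnected_closedBall.inter_frontier_nonempty
    ⟨x, mem_closedBall_self dist_nonneg, hx⟩ ⟨y, mem_closedBall'.2 le_rfl, hy⟩
  exact (infDist_le_dist_of_mem hzV).trans (mem_closedBall'.1 hz)

theorem lintegral_fun_norm_addHaar {E : Type*} [NormedAddCommGroup E] [NormedSpace ℝ E]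
    [FiniteDimensional ℝ E] [MeasurableSpace E] [BorelSpace E] [Nontrivial E]
    (μ : Measure E) [μ.IsAddHaarMeasure] {f : ℝ → ℝ≥0∞} (hf : Measurable f) :
    ∫⁻ x, f ‖x‖ ∂μ = Module.finrank ℝ E * μ (ball 0 1) *
      ∫⁻ r in Ioi 0, ENNReal.ofReal (r ^ (Module.finrank ℝ E - 1)) * f r := by
  have hf_val : Measurable fun r : Ioi (0 : ℝ) => f r := hf.comp measurable_subtype_coe
  have hf_snd : Measurable fun p : sphere (0 : E) 1 × Ioi (0 : ℝ) => f p.2 :=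
    hf_val.comp measurable_snd
  calc ∫⁻ x, f ‖x‖ ∂μ = ∫⁻ x : ({0}ᶜ : Set E), f ‖x.1‖ ∂μ.comap (↑) := by
        rw [lintegral_subtype_comap (measurableSet_singleton 0).compl fun x => f ‖x‖,
          restrict_compl_singleton]
    _ = ∫⁻ p, f p.2 ∂μ.toSphere.prod (.volumeIoiPow (Module.finrank ℝ E - 1)) := by
        simpa using μ.measurePreserving_homeomorphUnitSphereProd.lintegral_comp hf_snd
    _ = μ.toSphere univ * ∫⁻ r, f r ∂.volumeIoiPow (Module.finrank ℝ E - 1) := by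
        rw [lintegral_prod _ hf_snd.aemeasurable]
        simp [lintegral_const, mul_comm]
    _ = _ := by
        rw [μ.toSphere_apply_univ, Measure.volumeIoiPow, lintegral_withDensity_eq_lintegral_mul _
          (measurable_subtype_coe.pow_const _).ennreal_ofReal hf_val]
        exact congrArg _ (lintegral_subtype_comap measurableSet_Ioi
          fun r => ENNReal.ofReal (r ^ (Module.finrank ℝ E - 1)) * f r)

theorem lintegral_lintegral_indicator_Ici {X : Type*} [MeasurableSpace X] (μ : Measure X)
    [SFinite μ] (ν : Measure ℝ) [SFinite ν] {g : X → ℝ} (hg : Measurable g) {c : ℝ → ℝ≥0∞}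
    (hc : Measurable c) :
    ∫⁻ x, ∫⁻ r, (Ici (g x)).indicator c r ∂ν ∂μ = ∫⁻ r, μ {x | g x ≤ r} * c r ∂ν := by
  have hF : Measurable fun p : X × ℝ => (Ici (g p.1)).indicator c p.2 := by
    simp only [indicator_apply, mem_Ici]
    exact Measurable.ite (measurableSet_le (hg.comp measurable_fst) measurable_snd)
      (hc.comp measurable_snd) measurable_const
  rw [lintegral_lintegral_swap hF.aemeasurable]
  refine lintegral_congr fun r => ?_
  have hset : MeasurableSet {x | g x ≤ r} := measurableSet_le hg measurable_const
  rw [mul_comm, ← lintegral_indicator_const hset]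
  rfl

section Euclidean

variable {n : ℕ}

theorem clNbd_inter_add_clNbd_compl_inter {E : Set (EuclideanSpace ℝ (Fin n))}
    (hE : MeasurableSet E) (ρ : ℝ) (Γ Ω : Set (EuclideanSpace ℝ (Fin n))) :
    volume (clNbd n ρ Γ (E ∩ Ω)) + volume (clNbd n ρ Γ (Eᶜ ∩ Ω)) = volume (clNbd n ρ Γ Ω) := by
  rw [← measure_inter_add_sdiff (clNbd n ρ Γ Ω) hE]
  congr 2 <;> ext x <;> simp only [clNbd, mem_ofPred_eq, mem_inter_iff, Set.mem_sdiff,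
    mem_compl_iff] <;> tauto

theorem interL_comm (s : ℝ) (A B : Set (EuclideanSpace ℝ (Fin n))) :
    interL n s A B = interL n s B A := by
  have hker : Measurable fun p : EuclideanSpace ℝ (Fin n) × EuclideanSpace ℝ (Fin n) =>
      fracKer n s p.1 p.2 :=
    ((measurable_fst.sub measurable_snd).norm.pow_const _).ennreal_ofReal
  rw [interL, interL, lintegral_lintegral_swap hker.aemeasurable]
  simp only [fracKer, norm_sub_rev]

theorem ofReal_rpow_pred_mul_ofReal_rpow (hn : 1 ≤ n) (s : ℝ) {r : ℝ} (hr : 0 < r) :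
    ENNReal.ofReal (r ^ (n - 1)) * ENNReal.ofReal (r ^ (-((n : ℝ) + s))) =
      ENNReal.ofReal (r ^ (-(1 + s))) := by
  rw [← ENNReal.ofReal_mul (by positivity), ← Real.rpow_natCast, ← Real.rpow_add hr,
    Nat.cast_sub hn]
  congr 2
  push_cast
  ring

theorem setLIntegral_fracKer_le (hn : 1 ≤ n) (s : ℝ) {B : Set (EuclideanSpace ℝ (Fin n))}
    {x : EuclideanSpace ℝ (Fin n)} {d : ℝ} (hd : ∀ y ∈ B, d ≤ dist x y) :
    ∫⁻ y in B, fracKer n s x y ≤ n * volume (ball (0 : EuclideanSpace ℝ (Fin n)) 1) *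
      ∫⁻ r in Ioi 0, (Ici d).indicator (fun r => ENNReal.ofReal (r ^ (-(1 + s)))) r := by
  have : NeZero n := ⟨by omega⟩
  set K : ℝ → ℝ≥0∞ := (Ici d).indicator fun r => ENNReal.ofReal (r ^ (-((n : ℝ) + s)))
  have hK : Measurable K :=
    (measurable_id.pow_const _).ennreal_ofReal.indicator measurableSet_Ici
  calc ∫⁻ y in B, fracKer n s x y ≤ ∫⁻ y in B, K ‖x - y‖ :=
        setLIntegral_mono (hK.comp (measurable_const.sub measurable_id).norm) fun y hy => by
          simp [K, fracKer, ← dist_eq_norm, hd y hy]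
    _ ≤ ∫⁻ y, K ‖x - y‖ := setLIntegral_le_lintegral _ _
    _ = ∫⁻ z, K ‖z‖ := lintegral_sub_left_eq_self (fun z => K ‖z‖) x
    _ = n * volume (ball (0 : EuclideanSpace ℝ (Fin n)) 1) *
          ∫⁻ r in Ioi 0, ENNReal.ofReal (r ^ (n - 1)) * K r := by
        rw [lintegral_fun_norm_addHaar volume hK, finrank_euclideanSpace_fin]
    _ = _ := by
        refine congrArg _ (setLIntegral_congr_fun measurableSet_Ioi fun r hr => ?_)
        by_cases hdr : d ≤ r
        · simp only [K, indicator_of_mem (mem_Ici.2 hdr)]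
          exact ofReal_rpow_pred_mul_ofReal_rpow hn s hr
        · simp [K, hdr]

theorem interL_le_of_le_dist (hn : 1 ≤ n) (s : ℝ) {A B Γ : Set (EuclideanSpace ℝ (Fin n))}
    (hsep : ∀ x ∈ A, ∀ y ∈ B, infDist x Γ ≤ dist x y) :
    interL n s A B ≤ n * volume (ball (0 : EuclideanSpace ℝ (Fin n)) 1) *
      ∫⁻ r in Ioi 0, volume (clNbd n r Γ A) * ENNReal.ofReal (r ^ (-(1 + s))) := by
  have hne : (n : ℝ≥0∞) * volume (ball (0 : EuclideanSpace ℝ (Fin n)) 1) ≠ ⊤ :=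
    ENNReal.mul_ne_top (ENNReal.natCast_ne_top n) measure_ball_lt_top.ne
  have hbound : Measurable fun d : ℝ =>
      ∫⁻ r in Ioi 0, (Ici d).indicator (fun r => ENNReal.ofReal (r ^ (-(1 + s)))) r :=
    Antitone.measurable fun d d' hdd' => lintegral_mono fun r =>
      indicator_le_indicator_of_subset (Ici_subset_Ici.2 hdd') (fun _ => zero_le) r
  calc interL n s A B ≤ ∫⁻ x in A, n * volume (ball (0 : EuclideanSpace ℝ (Fin n)) 1) *
        ∫⁻ r in Ioi 0, (Ici (infDist x Γ)).indicator
          (fun r => ENNReal.ofReal (r ^ (-(1 + s)))) r :=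
        setLIntegral_mono (hbound.comp (continuous_infDist_pt Γ).measurable |>.const_mul _)
          fun x hx => setLIntegral_fracKer_le hn s (hsep x hx)
    _ = _ := by
        rw [lintegral_const_mul' _ _ hne, lintegral_lintegral_indicator_Ici _ _
          (continuous_infDist_pt Γ).measurable (c := fun r => ENNReal.ofReal (r ^ (-(1 + s))))
          (measurable_id.pow_const _).ennreal_ofReal]
        refine congrArg _ (lintegral_congr fun r => ?_)
        rw [Measure.restrict_apply (measurableSet_le (continuous_infDist_pt Γ).measurable
          measurable_const), inter_comm]
        rfl

end Euclidean

theorem two_perL_le_nbd_integral_general (n : ℕ) (hn : 1 ≤ n) (Ω : Set (EuclideanSpace ℝ (Fin n)))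
    (E : Set (EuclideanSpace ℝ (Fin n))) (hE : MeasurableSet E) (s : ℝ) :
    2 * perL n s E Ω ≤
      (n : ℝ≥0∞) * volume (ball (0 : EuclideanSpace ℝ (Fin n)) 1) *
        ∫⁻ ρ in Set.Ioi (0 : ℝ),
          volume (clNbd n ρ (frontier E) Ω) * ENNReal.ofReal (ρ ^ (-(1 + s))) := by
  have hsep : ∀ x ∈ E ∩ Ω, ∀ y ∈ Eᶜ ∩ Ω, infDist x (frontier E) ≤ dist x y :=
    fun x hx y hy => infDist_frontier_le_dist hx.1 hy.1
  have hsep' : ∀ x ∈ Eᶜ ∩ Ω, ∀ y ∈ E ∩ Ω, infDist x (frontier E) ≤ dist x y :=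
    fun x hx y hy => frontier_compl E ▸ infDist_frontier_le_dist hx.1 (not_not.2 hy.1)
  set C := (n : ℝ≥0∞) * volume (ball (0 : EuclideanSpace ℝ (Fin n)) 1)
  calc 2 * perL n s E Ω = interL n s (E ∩ Ω) (Eᶜ ∩ Ω) + interL n s (Eᶜ ∩ Ω) (E ∩ Ω) := by
        rw [perL, two_mul, interL_comm s (E ∩ Ω)]
    _ ≤ C * (∫⁻ r in Ioi 0, volume (clNbd n r (frontier E) (E ∩ Ω)) * .ofReal (r ^ (-(1 + s)))) +
          C * ∫⁻ r in Ioi 0, volume (clNbd n r (frontier E) (Eᶜ ∩ Ω)) * .ofReal (r ^ (-(1 + s))) :=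
        add_le_add (interL_le_of_le_dist hn s hsep) (interL_le_of_le_dist hn s hsep')
    _ ≤ C * ∫⁻ r in Ioi 0, (volume (clNbd n r (frontier E) (E ∩ Ω)) +
          volume (clNbd n r (frontier E) (Eᶜ ∩ Ω))) * .ofReal (r ^ (-(1 + s))) := by
        simpa only [← mul_add, add_mul] using mul_le_mul_right (le_lintegral_add _ _) C
    _ = _ := by simp only [clNbd_inter_add_clNbd_compl_inter hE]

/-- For a bounded open `Ω`, a measurable `E` and `s ∈ (0,1)`:
`2 P_s^L(E,Ω) ≤ n ω_n ∫_0^∞ |N̄_ρ^Ω(∂E)| ρ^{-(1+s)} dρ`. -/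
theorem two_perL_le_nbd_integral (n : ℕ) (hn : 1 ≤ n) (Ω : Set (EuclideanSpace ℝ (Fin n)))
    (hΩo : IsOpen Ω) (hΩb : IsBounded Ω) (E : Set (EuclideanSpace ℝ (Fin n)))
    (hE : MeasurableSet E) (s : ℝ) (hs : s ∈ Set.Ioo (0 : ℝ) 1) :
    2 * perL n s E Ω ≤
      (n : ℝ≥0∞) * volume (ball (0 : EuclideanSpace ℝ (Fin n)) 1) *
        ∫⁻ ρ in Set.Ioi (0 : ℝ),
          volume (clNbd n ρ (frontier E) Ω) * ENNReal.ofReal (ρ ^ (-(1 + s))) :=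
  two_perL_le_nbd_integral_general n hn Ω E hE s
end

section
/- Let E ⊆ ℝⁿ be a bounded measurable set with ∂⁻E ≠ ∅, and suppose the upper Minkowski dimension d := Dim̄_M(∂⁻E, ℝⁿ) satisfies d ∈ [n−1, n). Then P_s(E) < ∞ for every s ∈ (0, n−d). -/
open MeasureTheory Metric Set Filter Bornology
open scoped ENNReal Topology

/-!
Write `Γ = ∂⁻E`. A point `x ∈ E` near which `Eᶜ` is null and which lies off `Γ` sees `Eᶜ` only
outside the ball `B(x, dist(x, Γ))`: this ball is connected and misses `Γ`, and off `Γ` the open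
sets where `E`, resp. `Eᶜ`, is locally null are disjoint and cover everything. Polar coordinates
then bound the inner integral of `P_s(E)` at `x` by `c · dist(x, Γ)^{-s}`, and almost every point
of `E` is of this kind once `|Γ| = 0`.

Pick `r` with `Dim̄_M Γ < r < n - s`. Then `M̄^r(Γ) < ∞`, i.e. `|N̄_ρ(Γ)| ≤ C ρ^{n-r}` for small
`ρ`; this gives `|Γ| = 0`, and by the layer cake formula it makes `dist(·, Γ)^{-s}` integrable
over the bounded set `E`, because `s < n - r`.
-/

namespace MeasureTheory.Measure

variable {X : Type*} [TopologicalSpace X] [MeasurableSpace X] {μ : Measure X} {s : Set X}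

lemma support_restrict_union_support_restrict_compl [μ.IsOpenPosMeasure] (hs : MeasurableSet s) :
    (μ.restrict s).support ∪ (μ.restrict sᶜ).support = univ := by
  rw [← support_add, restrict_add_restrict_compl hs, support_eq_univ]

lemma measure_inter_compl_support_restrict [OpensMeasurableSpace X]
    [HereditarilyLindelofSpace X] : μ (s ∩ (μ.restrict s).supportᶜ) = 0 := by
  rw [inter_comm, ← restrict_apply isOpen_compl_support.measurableSet, measure_compl_support]

lemma _root_.IsPreconnected.subset_compl_support_restrict_compl [μ.IsOpenPosMeasure]
    (hs : MeasurableSet s) {U : Set X} (hU : IsPreconnected U)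
    (hUs : Disjoint U ((μ.restrict s).support ∩ (μ.restrict sᶜ).support)) {x : X} (hxU : x ∈ U)
    (hx : x ∉ (μ.restrict sᶜ).support) : U ⊆ (μ.restrict sᶜ).supportᶜ := by
  have hcover : U ⊆ (μ.restrict sᶜ).supportᶜ ∪ (μ.restrict s).supportᶜ := by
    rw [← compl_inter, inter_comm]
    exact hUs.subset_compl_right
  have hdisj : Disjoint (μ.restrict sᶜ).supportᶜ (μ.restrict s).supportᶜ := by
    rw [disjoint_iff_inter_eq_empty, ← compl_union, union_comm,
      support_restrict_union_support_restrict_compl hs, compl_univ]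
  exact hU.subset_left_of_subset_union isOpen_compl_support isOpen_compl_support hdisj hcover
    ⟨x, hxU, hx⟩

end MeasureTheory.Measure

lemma mtb_eq_support_inter_support {n : ℕ} {E : Set (EuclideanSpace ℝ (Fin n))}
    (hE : MeasurableSet E) :
    mtb n E = (volume.restrict E).support ∩ (volume.restrict Eᶜ).support := by
  ext x
  simp only [mtb, mem_ofPred_eq, mem_inter_iff, nhds_basis_ball.mem_measureSupport,
    Measure.restrict_apply measurableSet_ball, ← forall_and]
  refine forall₂_congr fun r _ => ?_
  have hfin : volume (ball x r ∩ E) ≠ ⊤ :=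
    measure_ne_top_of_subset inter_subset_left measure_ball_lt_top.ne
  rw [inter_comm E, ← measure_inter_add_sdiff (ball x r) hE, sdiff_eq]
  refine and_congr_right' ⟨fun h => pos_iff_ne_zero.2 ?_, fun h => ENNReal.lt_add_right hfin h.ne'⟩
  rintro h0
  simp [h0] at h

lemma isClosed_mtb {n : ℕ} {E : Set (EuclideanSpace ℝ (Fin n))} (hE : MeasurableSet E) :
    IsClosed (mtb n E) :=
  mtb_eq_support_inter_support hE ▸ Measure.isClosed_support.inter Measure.isClosed_support

lemma eq_zero_of_eventually_le_mul_rpow {c C : ℝ≥0∞} (hC : C ≠ ⊤) {a : ℝ} (ha : 0 < a)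
    (h : ∀ᶠ ρ in 𝓝[>] 0, c ≤ C * ENNReal.ofReal (ρ ^ a)) : c = 0 := by
  have hlim : Tendsto (fun ρ : ℝ => C * ENNReal.ofReal (ρ ^ a)) (𝓝[>] 0) (𝓝 0) := by
    have hρ : Tendsto (fun ρ : ℝ => ρ ^ a) (𝓝[>] 0) (𝓝 0) := by
      simpa [Real.zero_rpow ha.ne'] using
        (Real.continuousAt_rpow_const 0 a (Or.inr ha.le)).tendsto.mono_left nhdsWithin_le_nhds
    simpa using ENNReal.Tendsto.const_mul (ENNReal.tendsto_ofReal hρ) (Or.inr hC)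
  exact nonpos_iff_eq_zero.1 (ge_of_tendsto hlim h)

section Growth

variable {α : Type*}

lemma setOf_lt_rpow_neg_subset {A : Set α} {f : α → ℝ} (hf : ∀ x ∈ A, 0 < f x) {s t : ℝ}
    (hs : 0 < s) (ht : 0 < t) :
    {x | t < f x ^ (-s)} ∩ A ⊆ A ∩ f ⁻¹' Iic (t ^ (-s⁻¹)) := by
  rintro x ⟨hx, hxA⟩
  refine ⟨hxA, ?_⟩
  calc f x = (f x ^ (-s)) ^ (-s⁻¹) := by
        rw [← Real.rpow_mul (hf x hxA).le, neg_mul_neg, mul_inv_cancel₀ hs.ne', Real.rpow_one]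
    _ ≤ t ^ (-s⁻¹) := Real.rpow_le_rpow_of_nonpos ht hx.le (by simp [hs.le])

lemma setLIntegral_rpow_neg_lt_top [MeasurableSpace α] {μ : Measure α} {A : Set α} {f : α → ℝ}
    {C : ℝ≥0∞} {a s : ℝ} (hA : MeasurableSet A) (hμA : μ A ≠ ⊤) (hf : Measurable f)
    (hfA : ∀ x ∈ A, 0 < f x) (hs : 0 < s) (hsa : s < a) (hC : C ≠ ⊤)
    (hgrowth : ∀ᶠ ρ in 𝓝[>] 0, μ (A ∩ f ⁻¹' Iic ρ) ≤ C * ENNReal.ofReal (ρ ^ a)) :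
    ∫⁻ x in A, ENNReal.ofReal (f x ^ (-s)) ∂μ < ⊤ := by
  rw [lintegral_eq_lintegral_meas_lt _ ((ae_restrict_iff' hA).2 (.of_forall fun x _ =>
    Real.rpow_nonneg (hfA x ‹_›).le _)) (hf.pow_const _).aemeasurable]
  have hlayer : ∀ t ∈ Ioi (0 : ℝ),
      μ.restrict A {x | t < f x ^ (-s)} ≤ μ (A ∩ f ⁻¹' Iic (t ^ (-s⁻¹))) := fun t ht => by
    rw [Measure.restrict_apply' hA]
    exact measure_mono (setOf_lt_rpow_neg_subset hfA hs ht)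
  have hρ : Tendsto (fun t : ℝ => t ^ (-s⁻¹)) atTop (𝓝[>] 0) :=
    tendsto_nhdsWithin_iff.2 ⟨tendsto_rpow_neg_atTop (inv_pos.2 hs),
      (eventually_gt_atTop 0).mono fun t ht => Real.rpow_pos_of_pos ht _⟩
  obtain ⟨T, hT⟩ := (eventually_atTop.1 ((hρ.eventually hgrowth).and (eventually_gt_atTop 0)))
  have hexp : -s⁻¹ * a < -1 := by
    rw [neg_mul, neg_lt_neg_iff, inv_mul_eq_div, one_lt_div hs]
    exact hsa
  have hnear : ∫⁻ t in Ioc 0 T, μ.restrict A {x | t < f x ^ (-s)} < ⊤ := by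
    calc ∫⁻ t in Ioc 0 T, μ.restrict A {x | t < f x ^ (-s)}
        ≤ ∫⁻ _ in Ioc 0 T, μ A := lintegral_mono fun t =>
          (measure_mono (subset_univ _)).trans (Measure.restrict_apply_univ A).le
      _ < ⊤ := by
          rw [setLIntegral_const]
          exact ENNReal.mul_lt_top hμA.lt_top measure_Ioc_lt_top
  have hfar : ∫⁻ t in Ioi T, μ.restrict A {x | t < f x ^ (-s)} < ⊤ := by
    calc ∫⁻ t in Ioi T, μ.restrict A {x | t < f x ^ (-s)}
        ≤ ∫⁻ t in Ioi T, C * ENNReal.ofReal (t ^ (-s⁻¹ * a)) := by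
          refine setLIntegral_mono' measurableSet_Ioi fun t ht => ?_
          have ht' := hT t (le_of_lt ht)
          refine (hlayer t (ht'.2)).trans ?_
          rw [Real.rpow_mul ht'.2.le]
          exact ht'.1
      _ = C * ∫⁻ t in Ioi T, ENNReal.ofReal (t ^ (-s⁻¹ * a)) := lintegral_const_mul' _ _ hC
      _ < ⊤ := ENNReal.mul_lt_top hC.lt_top
          (integrableOn_Ioi_rpow_of_lt hexp (hT T le_rfl).2).setLIntegral_lt_top
  calc ∫⁻ t in Ioi 0, μ.restrict A {x | t < f x ^ (-s)}
      ≤ ∫⁻ t in Ioc 0 T ∪ Ioi T, μ.restrict A {x | t < f x ^ (-s)} :=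
        lintegral_mono_set Ioi_subset_Ioc_union_Ioi
    _ ≤ _ := lintegral_union_le _ _ _
    _ < ⊤ := ENNReal.add_lt_top.2 ⟨hnear, hfar⟩

end Growth

section Minkowski

variable {n : ℕ} {Γ Ω : Set (EuclideanSpace ℝ (Fin n))}

lemma upMinkDim_nonneg : 0 ≤ upMinkDim n Γ Ω :=
  Real.sSup_nonneg fun _ hr => hr.1.1

lemma upMinkContent_ne_top_of_upMinkDim_lt {r : ℝ} (hr : upMinkDim n Γ Ω < r) (hrn : r ≤ n) :
    upMinkContent n r Γ Ω ≠ ⊤ := fun htop =>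
  hr.not_ge <| le_csSup ⟨n, fun _ hr' => hr'.1.2⟩ ⟨⟨upMinkDim_nonneg.trans hr.le, hrn⟩, htop⟩

lemma exists_eventually_volume_clNbd_le {r : ℝ} (hr : upMinkContent n r Γ Ω ≠ ⊤) :
    ∃ C ≠ ⊤, ∀ᶠ ρ in 𝓝[>] 0,
      volume (clNbd n ρ Γ Ω) ≤ C * ENNReal.ofReal (ρ ^ ((n : ℝ) - r)) := by
  refine ⟨upMinkContent n r Γ Ω + 1, ENNReal.add_ne_top.2 ⟨hr, ENNReal.one_ne_top⟩, ?_⟩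
  filter_upwards [eventually_lt_of_limsup_lt (ENNReal.lt_add_right hr one_ne_zero),
    self_mem_nhdsWithin] with ρ hlt (hρ : 0 < ρ)
  refine (ENNReal.div_lt_iff (Or.inl ?_) (Or.inl ENNReal.ofReal_ne_top)).1 hlt |>.le
  exact (ENNReal.ofReal_pos.2 (Real.rpow_pos_of_pos hρ _)).ne'

end Minkowski

section Kernel

open Module

variable {E : Type*} [NormedAddCommGroup E] [NormedSpace ℝ E] [FiniteDimensional ℝ E]
  [MeasurableSpace E] [BorelSpace E] (μ : Measure E) [μ.IsAddHaarMeasure]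

lemma setLIntegral_compl_ball_norm_sub_rpow (x : E) {s δ : ℝ} (hs : 0 < s) (hδ : 0 < δ) :
    ∫⁻ y in (ball x δ)ᶜ, ENNReal.ofReal (‖x - y‖ ^ (-((finrank ℝ E : ℝ) + s))) ∂μ =
      ENNReal.ofReal (finrank ℝ E * μ.real (ball 0 1) * (δ ^ (-s) / s)) := by
  rcases subsingleton_or_nontrivial E with hE | hE
  · have hball : (ball x δ)ᶜ = ∅ := by
      rw [compl_empty_iff, Subsingleton.eq_univ_of_nonempty ⟨x, mem_ball_self hδ⟩]
    simp [hball, finrank_zero_of_subsingleton]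
  set g : ℝ → ℝ := (Ici δ).indicator fun t => t ^ (-((finrank ℝ E : ℝ) + s))
  have hpolar : ∀ t ∈ Ioi (0 : ℝ),
      t ^ (finrank ℝ E - 1) • g t = (Ici δ).indicator (· ^ (-s - 1)) t := by
    intro t (ht : 0 < t)
    by_cases htδ : t ∈ Ici δ
    · simp only [g, indicator_of_mem htδ, smul_eq_mul]
      rw [← Real.rpow_natCast, ← Real.rpow_add ht, Nat.cast_sub finrank_pos]
      congr 1
      ring
    · simp [g, indicator_of_notMem htδ]
  have hexp : -s - 1 < -1 := by linarith
  have hint : Integrable (fun z => g ‖z‖) μ := by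
    rw [integrable_fun_norm_addHaar, integrableOn_congr_fun hpolar measurableSet_Ioi]
    refine ((integrable_indicator_iff measurableSet_Ici).2 ?_).integrableOn
    exact (integrableOn_Ici_iff_integrableOn_Ioi).2 (integrableOn_Ioi_rpow_of_lt hexp hδ)
  have hind : ∀ y, (ball x δ)ᶜ.indicator
      (fun y => ENNReal.ofReal (‖x - y‖ ^ (-((finrank ℝ E : ℝ) + s)))) y =
        ENNReal.ofReal (g ‖x - y‖) := by
    intro y
    by_cases hy : y ∈ ball x δ
    · have : ‖x - y‖ ∉ Ici δ := by simpa [dist_eq_norm, norm_sub_rev] using hy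
      simp [g, hy, this]
    · have : ‖x - y‖ ∈ Ici δ := by simpa [dist_eq_norm, norm_sub_rev] using hy
      simp [g, hy, this]
  rw [← lintegral_indicator measurableSet_ball.compl, lintegral_congr hind,
    ← ofReal_integral_eq_lintegral_ofReal (hint.comp_sub_left x)
      (.of_forall fun y => indicator_nonneg (fun t _ => ?_) _),
    integral_sub_left_eq_self (fun z => g ‖z‖) μ x, integral_fun_norm_addHaar,
    setIntegral_congr_fun measurableSet_Ioi hpolar, setIntegral_indicator measurableSet_Ici,
    inter_eq_right.2 (Ici_subset_Ioi.2 hδ), integral_Ici_eq_integral_Ioi,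
    integral_Ioi_rpow_of_lt hexp hδ]
  · congr 1
    rw [nsmul_eq_mul, smul_eq_mul, sub_add_cancel, neg_div_neg_eq, mul_assoc]
  · exact Real.rpow_nonneg (hδ.le.trans ‹_›) _

end Kernel

section Perimeter

open MeasureTheory.Measure

variable {n : ℕ} {E : Set (EuclideanSpace ℝ (Fin n))}

lemma measure_inter_support_restrict_compl_eq_zero (hE : MeasurableSet E)
    (hΓ : volume (mtb n E) = 0) : volume (E ∩ (volume.restrict Eᶜ).support) = 0 := by
  refine measure_mono_null (fun x hx => ?_)
    (measure_union_null hΓ (measure_inter_compl_support_restrict (s := E)))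
  by_cases hxE : x ∈ (volume.restrict E).support
  · exact Or.inl (mtb_eq_support_inter_support hE ▸ ⟨hxE, hx.2⟩)
  · exact Or.inr ⟨hx.1, hxE⟩

lemma infDist_mtb_pos (hE : MeasurableSet E) (hΓ : (mtb n E).Nonempty)
    {x : EuclideanSpace ℝ (Fin n)} (hx : x ∉ (volume.restrict Eᶜ).support) :
    0 < infDist x (mtb n E) :=
  ((isClosed_mtb hE).notMem_iff_infDist_pos hΓ).1 fun h =>
    hx (mtb_eq_support_inter_support hE ▸ h).2

lemma setLIntegral_fracKer_compl_le (hE : MeasurableSet E) (hΓ : (mtb n E).Nonempty) {s : ℝ}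
    (hs : 0 < s) {x : EuclideanSpace ℝ (Fin n)} (hx : x ∉ (volume.restrict Eᶜ).support) :
    ∫⁻ y in Eᶜ, fracKer n s x y ≤
      ENNReal.ofReal (n * volume.real (ball (0 : EuclideanSpace ℝ (Fin n)) 1) / s) *
        ENNReal.ofReal (infDist x (mtb n E) ^ (-s)) := by
  have hδ := infDist_mtb_pos hE hΓ hx
  have hball : ball x (infDist x (mtb n E)) ⊆ (volume.restrict Eᶜ).supportᶜ :=
    (convex_ball _ _).isPreconnected.subset_compl_support_restrict_compl hE
      (mtb_eq_support_inter_support hE ▸ disjoint_ball_infDist) (mem_ball_self hδ) hx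
  have hnull : volume (Eᶜ \ (ball x (infDist x (mtb n E)))ᶜ) = 0 := by
    rw [sdiff_compl]
    exact measure_mono_null (inter_subset_inter_right _ hball) measure_inter_compl_support_restrict
  calc ∫⁻ y in Eᶜ, fracKer n s x y
      ≤ ∫⁻ y in (ball x (infDist x (mtb n E)))ᶜ, fracKer n s x y :=
        lintegral_mono_set' (ae_le_set.2 hnull)
    _ = _ := by
        have := setLIntegral_compl_ball_norm_sub_rpow volume x hs hδ
        rw [finrank_euclideanSpace_fin] at this
        simp only [fracKer]
        rw [this, ← ENNReal.ofReal_mul (by positivity)]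
        congr 1
        ring

end Perimeter

theorem perG_lt_top_of_upMinkDim_general (n : ℕ) (E : Set (EuclideanSpace ℝ (Fin n)))
    (hE : MeasurableSet E) (hEb : IsBounded E) (hne : (mtb n E).Nonempty) :
    ∀ s ∈ Set.Ioo (0 : ℝ) ((n : ℝ) - upMinkDim n (mtb n E) Set.univ),
      perG n s E < ⊤ := by
  rintro s ⟨hs, hsd⟩
  set Γ := mtb n E
  obtain ⟨r, hdr, hrs⟩ := exists_between (lt_sub_comm.1 hsd)
  obtain ⟨C, hC, hgrowth⟩ := exists_eventually_volume_clNbd_le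
    (upMinkContent_ne_top_of_upMinkDim_lt hdr (by linarith))
  have hΓnull : volume Γ = 0 := by
    refine eq_zero_of_eventually_le_mul_rpow hC (a := n - r) (by linarith) ?_
    filter_upwards [hgrowth, self_mem_nhdsWithin] with ρ hρ (hρ0 : 0 < ρ)
    refine (measure_mono fun x hx => ?_).trans hρ
    exact ⟨mem_univ x, (infDist_zero_of_mem hx).trans_le hρ0.le⟩
  set G := E \ (volume.restrict Eᶜ).support
  have hGm : MeasurableSet G := hE.diff Measure.isClosed_support.measurableSet
  have hEG : E ≤ᵐ[volume] G := ae_le_set.2 <| by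
    rw [sdiff_sdiff_right_self]
    exact measure_inter_support_restrict_compl_eq_zero hE hΓnull
  have hG : ∫⁻ x in G, ENNReal.ofReal (infDist x Γ ^ (-s)) < ⊤ :=
    setLIntegral_rpow_neg_lt_top hGm (measure_ne_top_of_subset sdiff_subset hEb.measure_lt_top.ne)
      (continuous_infDist_pt Γ).measurable (fun x hx => infDist_mtb_pos hE hne hx.2) hs
      (by linarith : s < n - r) hC <| hgrowth.mono fun ρ hρ =>
        (measure_mono fun x hx => show x ∈ clNbd n ρ Γ univ from ⟨mem_univ x, hx.2⟩).trans hρ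
  calc perG n s E ≤ ∫⁻ x in G, ∫⁻ y in Eᶜ, fracKer n s x y := lintegral_mono_set' hEG
    _ ≤ ∫⁻ x in G, ENNReal.ofReal (n * volume.real (ball (0 : EuclideanSpace ℝ (Fin n)) 1) / s) *
          ENNReal.ofReal (infDist x Γ ^ (-s)) :=
        setLIntegral_mono' hGm fun x hx => setLIntegral_fracKer_compl_le hE hne hs hx.2
    _ < ⊤ := by
        rw [lintegral_const_mul' _ _ ENNReal.ofReal_ne_top]
        exact ENNReal.mul_lt_top ENNReal.ofReal_lt_top hG

/-- If `E ⊆ ℝⁿ` is bounded and measurable, `∂⁻E ≠ ∅`, and the upper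
Minkowski dimension `d` of `∂⁻E` lies in `[n-1, n)`, then `P_s(E) < ∞` for all
`s ∈ (0, n-d)`. -/
theorem perG_lt_top_of_upMinkDim (n : ℕ) (hn : 1 ≤ n) (E : Set (EuclideanSpace ℝ (Fin n)))
    (hE : MeasurableSet E) (hEb : IsBounded E) (hne : (mtb n E).Nonempty)
    (hd : upMinkDim n (mtb n E) Set.univ ∈ Set.Ico ((n : ℝ) - 1) n) :
    ∀ s ∈ Set.Ioo (0 : ℝ) ((n : ℝ) - upMinkDim n (mtb n E) Set.univ),
      perG n s E < ⊤ :=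
  perG_lt_top_of_upMinkDim_general n E hE hEb hne
end

section
/- Let n ≥ 1, λ > 1, let a, b be positive integers, and let T_0 ⊆ ℝⁿ be a bounded measurable set. For each integer k ≥ 1 and each 1 ≤ i ≤ a b^{k−1}, let R_k^i be a linear isometry of ℝⁿ and x_k^i ∈ ℝⁿ, define F_k^i(x) := R_k^i(λ^{−k} x) + x_k^i, and set T := ⋃_{k≥1} ⋃_{i=1}^{a b^{k−1}} F_k^i(T_0). Assume |F_k^i(T_0) ∩ F_h^j(T_0)| = 0 whenever (k,i) ≠ (h,j). If s ∈ (0,1) satisfies s < n − log b / log λ and P_s(T_0) < ∞, then P_s(T) < ∞. -/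
open MeasureTheory Metric Set Filter Bornology
open scoped ENNReal Topology

theorem MeasurableEquiv.setLIntegral_image_of_map_eq_smul {α : Type*} [MeasurableSpace α]
    {μ : Measure α} (G : α ≃ᵐ α) {C : ℝ≥0∞} (hG : μ.map G = C • μ) (hC₀ : C ≠ 0) (hC : C ≠ ∞)
    (A : Set α) (g : α → ℝ≥0∞) :
    ∫⁻ y in G '' A, g y ∂μ = C⁻¹ * ∫⁻ x in A, g (G x) ∂μ := by
  have hmap : C * ∫⁻ y in G '' A, g y ∂μ = ∫⁻ x in A, g (G x) ∂μ := by
    rw [← smul_eq_mul, ← lintegral_smul_measure, ← Measure.restrict_smul, ← hG, G.restrict_map,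
      lintegral_map_equiv, G.injective.preimage_image]
  rw [← hmap, ← mul_assoc, ENNReal.inv_mul_cancel hC₀ hC, one_mul]

variable {n : ℕ}

noncomputable def similarity (e : EuclideanSpace ℝ (Fin n) ≃ₗᵢ[ℝ] EuclideanSpace ℝ (Fin n))
    {r : ℝ} (hr : r ≠ 0) (c : EuclideanSpace ℝ (Fin n)) :
    EuclideanSpace ℝ (Fin n) ≃ₜ EuclideanSpace ℝ (Fin n) :=
  (Homeomorph.smulOfNeZero r hr).trans (e.toHomeomorph.trans (Homeomorph.addRight c))

section similarity

variable (e : EuclideanSpace ℝ (Fin n) ≃ₗᵢ[ℝ] EuclideanSpace ℝ (Fin n)) {r : ℝ} (hr : r ≠ 0)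
  (c : EuclideanSpace ℝ (Fin n))

@[simp]
theorem similarity_apply (x : EuclideanSpace ℝ (Fin n)) :
    similarity e hr c x = e (r • x) + c := rfl

theorem norm_similarity_sub (x y : EuclideanSpace ℝ (Fin n)) :
    ‖similarity e hr c x - similarity e hr c y‖ = |r| * ‖x - y‖ := by
  rw [similarity_apply, similarity_apply, add_sub_add_right_eq_sub, ← map_sub, e.norm_map,
    ← smul_sub, norm_smul, Real.norm_eq_abs]

theorem map_similarity_volume :
    volume.map (similarity e hr c) = ENNReal.ofReal |(r ^ n)⁻¹| • volume := by
  have hsmul : volume.map (r • · : EuclideanSpace ℝ (Fin n) → _) =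
      ENNReal.ofReal |(r ^ n)⁻¹| • volume := by
    simpa using Measure.map_addHaar_smul (volume : Measure (EuclideanSpace ℝ (Fin n))) hr
  have hcomp : ⇑(similarity e hr c) = (· + c) ∘ e ∘ (r • ·) := rfl
  rw [hcomp, ← Measure.map_map (measurable_add_const c) (e.continuous.measurable.comp
    (measurable_const_smul r)), ← Measure.map_map e.continuous.measurable
    (measurable_const_smul r), hsmul, Measure.map_smul, e.measurePreserving.map_eq,
    Measure.map_smul, map_add_right_eq_self]


theorem fracKer_similarity (s : ℝ) (x y : EuclideanSpace ℝ (Fin n)) :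
    fracKer n s (similarity e hr c x) (similarity e hr c y) =
      ENNReal.ofReal (|r| ^ (-((n : ℝ) + s))) * fracKer n s x y := by
  rw [fracKer, norm_similarity_sub, Real.mul_rpow (abs_nonneg r) (norm_nonneg _),
    ENNReal.ofReal_mul (by positivity), fracKer]

theorem setLIntegral_similarity_image (A : Set (EuclideanSpace ℝ (Fin n)))
    (g : EuclideanSpace ℝ (Fin n) → ℝ≥0∞) :
    ∫⁻ y in similarity e hr c '' A, g y =
      ENNReal.ofReal (|r| ^ n) * ∫⁻ x in A, g (similarity e hr c x) := by
  have hrn : 0 < |r| ^ n := by positivity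
  have hC : ENNReal.ofReal |(r ^ n)⁻¹| = (ENNReal.ofReal (|r| ^ n))⁻¹ := by
    rw [abs_inv, abs_pow, ENNReal.ofReal_inv_of_pos hrn]
  have h := (similarity e hr c).toMeasurableEquiv.setLIntegral_image_of_map_eq_smul
    ((map_similarity_volume e hr c).trans (by rw [hC])) (by simp) (by simp [hr]) A g
  rwa [inv_inv] at h

theorem interL_similarity_image (s : ℝ) (A B : Set (EuclideanSpace ℝ (Fin n))) :
    interL n s (similarity e hr c '' A) (similarity e hr c '' B) =
      ENNReal.ofReal (|r| ^ ((n : ℝ) - s)) * interL n s A B := by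
  have hr' : 0 < |r| := abs_pos.2 hr
  have hexp : |r| ^ ((n : ℝ) - s) = |r| ^ n * (|r| ^ n * |r| ^ (-((n : ℝ) + s))) := by
    rw [← Real.rpow_natCast, ← Real.rpow_add hr', ← Real.rpow_add hr']
    ring_nf
  simp only [interL, setLIntegral_similarity_image, fracKer_similarity]
  simp only [lintegral_const_mul' _ _ ENNReal.ofReal_ne_top]
  rw [hexp, ENNReal.ofReal_mul (by positivity), ENNReal.ofReal_mul (by positivity), mul_assoc,
    mul_assoc]

theorem perG_similarity_image (s : ℝ) (E : Set (EuclideanSpace ℝ (Fin n))) :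
    perG n s (similarity e hr c '' E) = ENNReal.ofReal (|r| ^ ((n : ℝ) - s)) * perG n s E := by
  rw [perG, ← (similarity e hr c).image_compl, interL_similarity_image, perG]

end similarity

theorem perG_iUnion_le {ι : Type*} [Countable ι] (s : ℝ)
    (A : ι → Set (EuclideanSpace ℝ (Fin n))) :
    perG n s (⋃ i, A i) ≤ ∑' i, perG n s (A i) :=
  (lintegral_iUnion_le _ _).trans <| ENNReal.tsum_le_tsum fun i =>
    lintegral_mono fun _ => lintegral_mono_set (compl_subset_compl.2 (subset_iUnion A i))

theorem iUnion_one_le_le_eq_iUnion_sigma {α : Type*} (N : ℕ → ℕ) (S : ℕ → ℕ → Set α) :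
    ⋃ (k : ℕ) (_ : 1 ≤ k) (i : ℕ) (_ : 1 ≤ i) (_ : i ≤ N k), S k i =
      ⋃ p : Σ k, Fin (N (k + 1)), S (p.1 + 1) (p.2 + 1) := by
  ext x
  simp only [mem_iUnion, Sigma.exists]
  constructor
  · rintro ⟨_, hk, _, hi, hiN, hx⟩
    obtain ⟨k, rfl⟩ := Nat.exists_eq_add_of_le' hk
    obtain ⟨i, rfl⟩ := Nat.exists_eq_add_of_le' hi
    exact ⟨k, ⟨i, hiN⟩, hx⟩
  · rintro ⟨k, i, hx⟩
    exact ⟨k + 1, k.succ_pos, i + 1, i.succ_pos, i.isLt, hx⟩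

theorem natCast_lt_rpow_of_log_div_log_lt {b : ℕ} {lam d : ℝ} (hlam : 1 < lam)
    (h : Real.log b / Real.log lam < d) : (b : ℝ) < lam ^ d := by
  rcases b.eq_zero_or_pos with rfl | hb
  · simpa using Real.rpow_pos_of_pos (zero_lt_one.trans hlam) d
  · rw [Real.lt_rpow_iff_log_lt (by exact_mod_cast hb) (zero_lt_one.trans hlam),
      ← div_lt_iff₀ (Real.log_pos hlam)]
    exact h

theorem abs_inv_pow_rpow {lam : ℝ} (hlam : 0 < lam) (k : ℕ) (d : ℝ) :
    |(lam ^ k)⁻¹| ^ d = (lam ^ (-d)) ^ k := by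
  rw [abs_of_pos (by positivity), ← Real.rpow_natCast, ← Real.rpow_neg_one,
    ← Real.rpow_mul hlam.le, ← Real.rpow_natCast, ← Real.rpow_mul hlam.le, ← Real.rpow_mul hlam.le]
  ring_nf

theorem perG_lt_top_selfSimilar_general (n : ℕ) (lam : ℝ) (hlam : 1 < lam) (a b : ℕ)
    (T0 : Set (EuclideanSpace ℝ (Fin n)))
    (R : ℕ → ℕ → (EuclideanSpace ℝ (Fin n) →ₗᵢ[ℝ] EuclideanSpace ℝ (Fin n)))
    (c : ℕ → ℕ → EuclideanSpace ℝ (Fin n))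
    (F : ℕ → ℕ → EuclideanSpace ℝ (Fin n) → EuclideanSpace ℝ (Fin n))
    (hF : ∀ k i x, F k i x = R k i ((lam ^ k)⁻¹ • x) + c k i)
    (T : Set (EuclideanSpace ℝ (Fin n)))
    (hT : T = ⋃ (k : ℕ) (_ : 1 ≤ k) (i : ℕ) (_ : 1 ≤ i) (_ : i ≤ a * b ^ (k - 1)),
        F k i '' T0)
    (s : ℝ) (hsd : s < (n : ℝ) - Real.log b / Real.log lam)
    (hPT0 : perG n s T0 < ⊤) :
    perG n s T < ⊤ := by
  have hlam₀ : 0 < lam := zero_lt_one.trans hlam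
  set q := ENNReal.ofReal (lam ^ (-((n : ℝ) - s)))
  have hq : (b : ℝ≥0∞) * q < 1 := by
    have hb := natCast_lt_rpow_of_log_div_log_lt (d := (n : ℝ) - s) hlam (lt_sub_comm.1 hsd)
    rw [← ENNReal.ofReal_natCast, ← ENNReal.ofReal_mul (by positivity), ENNReal.ofReal_lt_one,
      Real.rpow_neg hlam₀.le, ← div_eq_mul_inv, div_lt_one (by positivity)]
    exact hb
  have hpiece : ∀ k i, perG n s (F k i '' T0) = q ^ k * perG n s T0 := by
    intro k i
    have hr : (lam ^ k)⁻¹ ≠ 0 := by positivity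
    rw [show F k i = similarity ((R k i).toLinearIsometryEquiv rfl) hr (c k i) from
      funext (hF k i), perG_similarity_image, abs_inv_pow_rpow hlam₀,
      ENNReal.ofReal_pow (by positivity)]
  calc perG n s T
      ≤ ∑' p : Σ k, Fin (a * b ^ (k + 1 - 1)), perG n s (F (p.1 + 1) (p.2 + 1) '' T0) := by
        rw [hT, iUnion_one_le_le_eq_iUnion_sigma]
        exact perG_iUnion_le s _
    _ = a * q * perG n s T0 * ∑' k, ((b : ℝ≥0∞) * q) ^ k := by
        simp only [hpiece, ENNReal.tsum_sigma', tsum_fintype, Finset.sum_const, Finset.card_univ,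
          Fintype.card_fin, nsmul_eq_mul, ← ENNReal.tsum_mul_left]
        congr 1 with k
        push_cast
        ring
    _ < ⊤ := ENNReal.mul_lt_top (ENNReal.mul_lt_top (ENNReal.mul_lt_top (ENNReal.natCast_lt_top a)
        ENNReal.ofReal_lt_top) hPT0) (tsum_geometric_lt_top.2 hq)

/-- Let `T` be the union of the sets `F_k^i(T₀)`, `k ≥ 1`,
`1 ≤ i ≤ a b^{k-1}`, where `F_k^i(x) = R_k^i(λ^{-k} x) + x_k^i` with `R_k^i` linear
isometries, and assume the pieces are pairwise a.e. disjoint. If `s ∈ (0,1)` with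
`s < n - log b / log λ` and `P_s(T₀) < ∞`, then `P_s(T) < ∞`. -/
theorem perG_lt_top_selfSimilar (n : ℕ) (hn : 1 ≤ n) (lam : ℝ) (hlam : 1 < lam)
    (a b : ℕ) (ha : 0 < a) (hb : 0 < b)
    (T0 : Set (EuclideanSpace ℝ (Fin n))) (hT0m : MeasurableSet T0) (hT0b : IsBounded T0)
    (R : ℕ → ℕ → (EuclideanSpace ℝ (Fin n) →ₗᵢ[ℝ] EuclideanSpace ℝ (Fin n)))
    (c : ℕ → ℕ → EuclideanSpace ℝ (Fin n))
    (F : ℕ → ℕ → EuclideanSpace ℝ (Fin n) → EuclideanSpace ℝ (Fin n))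
    (hF : ∀ k i x, F k i x = R k i ((lam ^ k)⁻¹ • x) + c k i)
    (T : Set (EuclideanSpace ℝ (Fin n)))
    (hT : T = ⋃ (k : ℕ) (_ : 1 ≤ k) (i : ℕ) (_ : 1 ≤ i) (_ : i ≤ a * b ^ (k - 1)),
        F k i '' T0)
    (hdisj : ∀ k h i j : ℕ, 1 ≤ k → 1 ≤ h → 1 ≤ i → i ≤ a * b ^ (k - 1) →
        1 ≤ j → j ≤ a * b ^ (h - 1) → (k, i) ≠ (h, j) →
        volume (F k i '' T0 ∩ F h j '' T0) = 0)
    (s : ℝ) (hs : s ∈ Set.Ioo (0 : ℝ) 1)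
    (hsd : s < (n : ℝ) - Real.log b / Real.log lam)
    (hPT0 : perG n s T0 < ⊤) :
    perG n s T < ⊤ :=
  perG_lt_top_selfSimilar_general n lam hlam a b T0 R c F hF T hT s hsd hPT0
end

section
/- Let 0 < a < 1 and let E := ⋃_{k ∈ ℕ} (a^{2k+1}, a^{2k}) ⊆ ℝ. Then for every s ∈ (0,1), P_s(E) = ∫_E ∫_{Eᶜ} |x−y|^{−(1+s)} dy dx < ∞. -/
/-!
Each component `I = (l, r)` of `E` satisfies `Eᶜ ⊆ Iᶜ`, so `P_s(E) ≤ ∑ₖ P_s(Iₖ)`. For an interval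
the inner integral is explicit, `∫_{Iᶜ} |x - y|^{-(1+s)} dy = ((x - l)^{-s} + (r - x)^{-s}) / s`, and
integrating over `I` gives `P_s(I) = 2 (r - l)^{1-s} / (s (1 - s))`. The component lengths
`a^{2k} (1 - a)` decay geometrically, hence so do their `(1 - s)`-th powers, and the series converges.
-/

open MeasureTheory Metric Set Filter
open scoped ENNReal Topology

/-- The global `s`-fractional perimeter of a set `E ⊆ ℝ`:
`P_s(E) = ∫_E ∫_{Eᶜ} |x-y|^{-(1+s)} dy dx`. -/
noncomputable def perR (s : ℝ) (E : Set ℝ) : ℝ≥0∞ :=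
  ∫⁻ x in E, ∫⁻ y in Eᶜ, ENNReal.ofReal (|x - y| ^ (-(1 + s)))

theorem setLIntegral_comp_sub_const (f : ℝ → ℝ≥0∞) (c : ℝ) (S : Set ℝ) :
    ∫⁻ y in (· - c) ⁻¹' S, f (y - c) = ∫⁻ t in S, f t :=
  (measurePreserving_sub_right volume c).setLIntegral_comp_preimage_emb
    (measurableEmbedding_subRight c) f S

theorem setLIntegral_comp_const_sub (f : ℝ → ℝ≥0∞) (c : ℝ) (S : Set ℝ) :
    ∫⁻ y in (c - ·) ⁻¹' S, f (c - y) = ∫⁻ t in S, f t :=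
  (Measure.measurePreserving_sub_left volume c).setLIntegral_comp_preimage_emb
    (MeasurableEquiv.subLeft c).measurableEmbedding f S

theorem lintegral_Ici_abs_rpow_neg_one_sub {s d : ℝ} (hs : 0 < s) (hd : 0 < d) :
    ∫⁻ t in Ici d, ENNReal.ofReal (|t| ^ (-(1 + s))) = ENNReal.ofReal (d ^ (-s) / s) := by
  rw [← Measure.restrict_congr_set Ioi_ae_eq_Ici,
    setLIntegral_congr_fun measurableSet_Ioi fun t (ht : d < t) => by
      rw [abs_of_pos (hd.trans ht)],
    ← ofReal_integral_eq_lintegral_ofReal (integrableOn_Ioi_rpow_of_lt (by linarith) hd)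
      ((ae_restrict_mem measurableSet_Ioi).mono fun t (ht : d < t) =>
        Real.rpow_nonneg (hd.trans ht).le _),
    integral_Ioi_rpow_of_lt (by linarith) hd]
  congr 1
  rw [show -(1 + s) + 1 = -s by ring, neg_div_neg_eq]

theorem lintegral_Ioo_zero_rpow_neg {s d : ℝ} (hs : s < 1) (hd : 0 ≤ d) :
    ∫⁻ t in Ioo 0 d, ENNReal.ofReal (t ^ (-s)) = ENNReal.ofReal (d ^ (1 - s) / (1 - s)) := by
  have hint : IntegrableOn (fun t : ℝ => t ^ (-s)) (Ioc 0 d) :=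
    (intervalIntegrable_iff_integrableOn_Ioc_of_le hd).mp
      (intervalIntegral.intervalIntegrable_rpow' (by linarith))
  rw [← ofReal_integral_eq_lintegral_ofReal (hint.mono_set Ioo_subset_Ioc_self)
      ((ae_restrict_mem measurableSet_Ioo).mono fun t (ht : t ∈ Ioo 0 d) =>
        Real.rpow_nonneg ht.1.le _),
    ← integral_Ioc_eq_integral_Ioo, ← intervalIntegral.integral_of_le hd,
    integral_rpow (Or.inl (by linarith)), Real.zero_rpow (by linarith), sub_zero,
    show -s + 1 = 1 - s by ring]

theorem lintegral_compl_Ioo_abs_sub_rpow {s l r x : ℝ} (hs : 0 < s) (hx : x ∈ Ioo l r) :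
    ∫⁻ y in (Ioo l r)ᶜ, ENNReal.ofReal (|x - y| ^ (-(1 + s)))
      = ENNReal.ofReal ((x - l) ^ (-s) / s) + ENNReal.ofReal ((r - x) ^ (-s) / s) := by
  have hcompl : (Ioo l r)ᶜ = Iic l ∪ Ici r := by
    rw [← Ioi_inter_Iio, compl_inter, compl_Ioi, compl_Iio]
  have hleft : Iic l = (x - ·) ⁻¹' Ici (x - l) := by
    rw [preimage_const_sub_Ici, sub_sub_cancel]
  have hright : Ici r = (· - x) ⁻¹' Ici (r - x) := by
    rw [preimage_sub_const_Ici, sub_add_cancel]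
  rw [hcompl, lintegral_union measurableSet_Ici
      (Iic_disjoint_Ici.mpr (hx.1.trans hx.2).not_ge), hleft, hright,
    setLIntegral_comp_const_sub (fun t => ENNReal.ofReal (|t| ^ (-(1 + s)))),
    lintegral_Ici_abs_rpow_neg_one_sub hs (sub_pos.mpr hx.1)]
  simp_rw [abs_sub_comm x]
  rw [setLIntegral_comp_sub_const (fun t => ENNReal.ofReal (|t| ^ (-(1 + s)))),
    lintegral_Ici_abs_rpow_neg_one_sub hs (sub_pos.mpr hx.2)]

theorem perR_Ioo {s l r : ℝ} (hs0 : 0 < s) (hs1 : s < 1) (hlr : l < r) :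
    perR s (Ioo l r) = ENNReal.ofReal (2 / (s * (1 - s)) * (r - l) ^ (1 - s)) := by
  have hshift : Ioo l r = (· - l) ⁻¹' Ioo 0 (r - l) := by
    rw [preimage_sub_const_Ioo, zero_add, sub_add_cancel]
  have hreflect : Ioo l r = (r - ·) ⁻¹' Ioo 0 (r - l) := by
    rw [preimage_const_sub_Ioo, sub_sub_cancel, sub_zero]
  have hhalf : ∫⁻ t in Ioo 0 (r - l), ENNReal.ofReal (t ^ (-s) / s)
      = ENNReal.ofReal ((r - l) ^ (1 - s) / (s * (1 - s))) := by
    simp_rw [div_eq_inv_mul _ s, ENNReal.ofReal_mul (inv_nonneg.mpr hs0.le)]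
    rw [lintegral_const_mul' _ _ ENNReal.ofReal_ne_top,
      lintegral_Ioo_zero_rpow_neg hs1 (sub_pos.mpr hlr).le, ← ENNReal.ofReal_mul (by positivity),
      ← div_eq_inv_mul, div_div, mul_comm (1 - s)]
  calc perR s (Ioo l r)
      = ∫⁻ x in Ioo l r,
          ENNReal.ofReal ((x - l) ^ (-s) / s) + ENNReal.ofReal ((r - x) ^ (-s) / s) :=
        setLIntegral_congr_fun measurableSet_Ioo fun _ hx =>
          lintegral_compl_Ioo_abs_sub_rpow hs0 hx
    _ = 2 * ENNReal.ofReal ((r - l) ^ (1 - s) / (s * (1 - s))) := by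
        rw [lintegral_add_left (by fun_prop), two_mul]
        nth_rw 1 [hshift]
        rw [hreflect, setLIntegral_comp_sub_const (fun t => ENNReal.ofReal (t ^ (-s) / s)),
          setLIntegral_comp_const_sub (fun t => ENNReal.ofReal (t ^ (-s) / s)), hhalf]
    _ = ENNReal.ofReal (2 / (s * (1 - s)) * (r - l) ^ (1 - s)) := by
        rw [← ENNReal.ofReal_ofNat 2, ← ENNReal.ofReal_mul zero_le_two, mul_div_assoc',
          div_mul_eq_mul_div]

theorem perR_iUnion_le {ι : Type*} [Countable ι] (s : ℝ) (A : ι → Set ℝ) :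
    perR s (⋃ i, A i) ≤ ∑' i, perR s (A i) :=
  (lintegral_iUnion_le A _).trans <| ENNReal.tsum_le_tsum fun i =>
    lintegral_mono fun _ => lintegral_mono_set (compl_subset_compl.mpr (subset_iUnion A i))

theorem summable_pow_sub_pow_succ_rpow {a p : ℝ} (ha0 : 0 ≤ a) (ha1 : a < 1) (hp : 0 < p) :
    Summable fun k : ℕ => (a ^ k - a ^ (k + 1)) ^ p := by
  have hgeom : Summable fun k : ℕ => (1 - a) ^ p * (a ^ p) ^ k :=
    (summable_geometric_of_lt_one (by positivity) (Real.rpow_lt_one ha0 ha1 hp)).mul_left _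
  refine hgeom.congr fun k => ?_
  rw [Real.rpow_pow_comm ha0, ← Real.mul_rpow (by linarith) (by positivity)]
  congr 1
  ring

/-- For `0 < a < 1` and `E = ⋃_k (a^{2k+1}, a^{2k})`, the set `E` has
finite global `s`-perimeter for every `s ∈ (0,1)`. -/
theorem perR_union_Ioo_lt_top (a : ℝ) (ha : a ∈ Set.Ioo (0 : ℝ) 1) (s : ℝ)
    (hs : s ∈ Set.Ioo (0 : ℝ) 1) :
    perR s (⋃ k : ℕ, Set.Ioo (a ^ (2 * k + 1)) (a ^ (2 * k))) < ⊤ := by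
  obtain ⟨ha0, ha1⟩ := ha
  obtain ⟨hs0, hs1⟩ := hs
  have hlen (k : ℕ) : a ^ (2 * k + 1) < a ^ (2 * k) :=
    pow_lt_pow_right_of_lt_one₀ ha0 ha1 (lt_add_one _)
  set f : ℕ → ℝ := fun k => 2 / (s * (1 - s)) * (a ^ (2 * k) - a ^ (2 * k + 1)) ^ (1 - s)
  have hf : Summable f :=
    ((summable_pow_sub_pow_succ_rpow ha0.le ha1 (sub_pos.mpr hs1)).comp_injective
      (mul_right_injective₀ two_ne_zero)).mul_left _
  have hf_nonneg (k : ℕ) : 0 ≤ f k :=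
    mul_nonneg (div_nonneg zero_le_two (mul_pos hs0 (sub_pos.mpr hs1)).le)
      (Real.rpow_nonneg (sub_nonneg.mpr (hlen k).le) _)
  calc perR s (⋃ k : ℕ, Ioo (a ^ (2 * k + 1)) (a ^ (2 * k)))
      ≤ ∑' k : ℕ, perR s (Ioo (a ^ (2 * k + 1)) (a ^ (2 * k))) := perR_iUnion_le s _
    _ = ENNReal.ofReal (∑' k, f k) := by
        rw [ENNReal.ofReal_tsum_of_nonneg hf_nonneg hf]
        exact tsum_congr fun k => perR_Ioo hs0 hs1 (hlen k)
    _ < ⊤ := ENNReal.ofReal_lt_top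
end

section
/- Let 0 < a < 1 and let E := ⋃_{k ∈ ℕ} (a^{2k+1}, a^{2k}) ⊆ ℝ. Then (1−s) P_s(E) tends to +∞ as s → 1⁻; in particular E does not have finite perimeter (its characteristic function is not of bounded variation on ℝ). -/
open MeasureTheory Metric Set Filter
open scoped ENNReal Topology

/-!
Write `E = ⋃ₖ (b(2k+1), b(2k))` with `b n = aⁿ`; only the strict decrease of `b` matters.
Each component `(b(2k+1), b(2k))` of `E` has a complementary gap immediately to its left. If `x`
lies at distance `t` to the right of the common endpoint, the gap contains an interval of length
`t` within distance `2t` of `x`, so the inner integral is at least `2^{-(1+s)} t^{-s}`;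
integrating over `t ∈ (0, ℓ)` gives `(1-s) L_s ≥ 2^{-(1+s)} ℓ^{1-s}`, which tends to `1/4` as
`s → 1`. Summing over `N` components, the liminf of `(1-s) P_s(E)` is at least `N/4` for every `N`.

The midpoints of the consecutive intervals `(b(j+1), b(j))` lie alternately in `E` and in its
complement, so the indicator of `E` makes infinitely many unit jumps along a monotone sequence.
-/

/-- The interaction `L_s(A, B)`. -/
noncomputable def fracInteraction (s : ℝ) (A B : Set ℝ) : ℝ≥0∞ :=
  ∫⁻ x in A, ∫⁻ y in B, ENNReal.ofReal (|x - y| ^ (-(1 + s)))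

def alternatingUnion (b : ℕ → ℝ) : Set ℝ :=
  ⋃ k : ℕ, Ioo (b (2 * k + 1)) (b (2 * k))

theorem eVariationOn_eq_top_of_antitone {α E : Type*} [LinearOrder α] [PseudoEMetricSpace E]
    {f : α → E} {s : Set α} {u : ℕ → α} (hu : Antitone u) (hus : ∀ n, u n ∈ s) {c : ℝ≥0∞}
    (hc : c ≠ 0) (hf : ∀ n, c ≤ edist (f (u n)) (f (u (n + 1)))) :
    eVariationOn f s = ∞ := by
  by_contra hV
  obtain ⟨n, hn⟩ := ENNReal.exists_nat_mul_gt hc hV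
  have hsum := eVariationOn.sum_le (f := f ∘ OrderDual.ofDual) (s := OrderDual.ofDual ⁻¹' s)
    (n := n) hu.dual_right hus
  rw [eVariationOn.comp_ofDual] at hsum
  refine hn.not_ge (le_trans ?_ hsum)
  calc (n : ℝ≥0∞) * c = ∑ _i ∈ Finset.range n, c := by simp
    _ ≤ _ := Finset.sum_le_sum fun i _ => (hf i).trans_eq (edist_comm _ _)

theorem integral_Ioo_sub_rpow {q ℓ r : ℝ} (hr : -1 < r) (hℓ : 0 ≤ ℓ) :
    ∫ x in Ioo q (q + ℓ), (x - q) ^ r = ℓ ^ (r + 1) / (r + 1) := by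
  rw [← integral_Ioc_eq_integral_Ioo, ← intervalIntegral.integral_of_le (by linarith),
    intervalIntegral.integral_comp_sub_right (· ^ r), sub_self, add_sub_cancel_left,
    integral_rpow (Or.inl hr), Real.zero_rpow (by linarith), sub_zero]

theorem integrableOn_Ioo_sub_rpow {q ℓ r : ℝ} (hr : -1 < r) (hℓ : 0 ≤ ℓ) :
    IntegrableOn (fun x => (x - q) ^ r) (Ioo q (q + ℓ)) := by
  have h := (intervalIntegral.intervalIntegrable_rpow' hr (a := 0) (b := ℓ)).comp_sub_right q
  rw [zero_add, add_comm, intervalIntegrable_iff_integrableOn_Ioc_of_le (by linarith)] at h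
  exact h.mono_set Ioo_subset_Ioc_self

section FracInteraction

variable {s : ℝ}

theorem perR_eq_fracInteraction (E : Set ℝ) : perR s E = fracInteraction s E Eᶜ := rfl

theorem fracInteraction_mono {A A' B B' : Set ℝ} (hA : A ⊆ A') (hB : B ⊆ B') :
    fracInteraction s A B ≤ fracInteraction s A' B' :=
  (lintegral_mono_set hA).trans (lintegral_mono fun _ => lintegral_mono_set hB)

theorem sum_fracInteraction_le {ι : Type*} {t : Finset ι} {A : ι → Set ℝ} {A' B : Set ℝ}
    (hd : (t : Set ι).PairwiseDisjoint A) (hm : ∀ i ∈ t, MeasurableSet (A i))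
    (hA : ∀ i ∈ t, A i ⊆ A') :
    ∑ i ∈ t, fracInteraction s (A i) B ≤ fracInteraction s A' B := by
  simp only [fracInteraction]
  rw [← lintegral_biUnion_finset hd hm]
  exact lintegral_mono_set (iUnion₂_subset hA)

theorem ofReal_rpow_le_lintegral_Ioo {q ℓ x : ℝ} (hs : -1 ≤ s) (hx : x ∈ Ioc q (q + ℓ)) :
    ENNReal.ofReal (2 ^ (-(1 + s)) * (x - q) ^ (-s)) ≤
      ∫⁻ y in Ioo (q - ℓ) q, ENNReal.ofReal (|x - y| ^ (-(1 + s))) := by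
  have hxq : 0 < x - q := sub_pos.2 hx.1
  have hpow : (2 * (x - q)) ^ (-(1 + s)) * (x - q) = 2 ^ (-(1 + s)) * (x - q) ^ (-s) := by
    rw [Real.mul_rpow zero_le_two hxq.le, mul_assoc, ← Real.rpow_add_one hxq.ne']
    ring_nf
  calc ENNReal.ofReal (2 ^ (-(1 + s)) * (x - q) ^ (-s))
      = ∫⁻ _ in Ioo (2 * q - x) q, ENNReal.ofReal ((2 * (x - q)) ^ (-(1 + s))) := by
        rw [setLIntegral_const, Real.volume_Ioo, ← ENNReal.ofReal_mul (by positivity),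
          show q - (2 * q - x) = x - q by ring, hpow]
    _ ≤ ∫⁻ y in Ioo (2 * q - x) q, ENNReal.ofReal (|x - y| ^ (-(1 + s))) := by
        refine setLIntegral_mono' measurableSet_Ioo fun y hy => ENNReal.ofReal_le_ofReal ?_
        have hxy : 0 < x - y := by linarith [hy.2]
        rw [abs_of_pos hxy]
        exact Real.rpow_le_rpow_of_nonpos hxy (by linarith [hy.1]) (by linarith)
    _ ≤ _ := lintegral_mono_set (Ioo_subset_Ioo_left (by linarith [hx.2]))

theorem ofReal_le_mul_fracInteraction_Ioo {q ℓ : ℝ} (hs₀ : -1 ≤ s) (hs₁ : s < 1) (hℓ : 0 ≤ ℓ) :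
    ENNReal.ofReal (2 ^ (-(1 + s)) * ℓ ^ (1 - s)) ≤
      ENNReal.ofReal (1 - s) * fracInteraction s (Ioo q (q + ℓ)) (Ioo (q - ℓ) q) := by
  have hr : -1 < -s := by linarith
  have hint : ∫ x in Ioo q (q + ℓ), 2 ^ (-(1 + s)) * (x - q) ^ (-s) =
      2 ^ (-(1 + s)) * ℓ ^ (1 - s) / (1 - s) := by
    rw [integral_const_mul, integral_Ioo_sub_rpow hr hℓ, neg_add_eq_sub, mul_div_assoc]
  calc ENNReal.ofReal (2 ^ (-(1 + s)) * ℓ ^ (1 - s))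
      = ENNReal.ofReal (1 - s) *
          ENNReal.ofReal (∫ x in Ioo q (q + ℓ), 2 ^ (-(1 + s)) * (x - q) ^ (-s)) := by
        rw [hint, ← ENNReal.ofReal_mul (by linarith), mul_div_cancel₀ _ (by linarith)]
    _ = ENNReal.ofReal (1 - s) *
          ∫⁻ x in Ioo q (q + ℓ), ENNReal.ofReal (2 ^ (-(1 + s)) * (x - q) ^ (-s)) := by
        rw [ofReal_integral_eq_lintegral_ofReal
          ((integrableOn_Ioo_sub_rpow hr hℓ).const_mul _)
          ((ae_restrict_iff' measurableSet_Ioo).2 (ae_of_all _ fun x hx => by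
            have : 0 ≤ x - q := by linarith [hx.1]
            positivity))]
    _ ≤ _ := mul_le_mul_right (setLIntegral_mono' measurableSet_Ioo fun x hx =>
        ofReal_rpow_le_lintegral_Ioo hs₀ (Ioo_subset_Ioc_self hx)) _

end FracInteraction

section AlternatingUnion

open Function

variable {b : ℕ → ℝ}

theorem Ioo_subset_alternatingUnion (k : ℕ) :
    Ioo (b (2 * k + 1)) (b (2 * k)) ⊆ alternatingUnion b :=
  subset_iUnion (fun k => Ioo (b (2 * k + 1)) (b (2 * k))) k

theorem Ioo_subset_compl_alternatingUnion (hb : Antitone b) (k : ℕ) :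
    Ioo (b (2 * k + 2)) (b (2 * k + 1)) ⊆ (alternatingUnion b)ᶜ := by
  intro y hy
  simp only [alternatingUnion, mem_compl_iff, mem_iUnion, not_exists]
  intro j hj
  rcases le_or_gt j k with hjk | hjk
  · exact (hy.2.trans_le (hb (by omega))).not_gt hj.1
  · exact (hj.2.trans_le (hb (by omega))).not_gt hy.1

theorem pairwise_disjoint_Ioo_alternatingUnion (hb : Antitone b) :
    Pairwise (Disjoint on fun k => Ioo (b (2 * k + 1)) (b (2 * k))) := by
  have h := Antitone.pairwise_disjoint_on_Ioo_succ (f := fun k => b (2 * k))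
    fun i j hij => hb (by omega)
  exact fun i j hij => (h hij).mono (Ioo_subset_Ioo_left (hb (by simp)))
    (Ioo_subset_Ioo_left (hb (by simp)))

theorem midpoint_mem_alternatingUnion_iff (hb : StrictAnti b) (j : ℕ) :
    (b (j + 1) + b j) / 2 ∈ alternatingUnion b ↔ Even j := by
  have hlt := hb j.lt_succ_self
  have hmid : (b (j + 1) + b j) / 2 ∈ Ioo (b (j + 1)) (b j) :=
    ⟨by linarith, by linarith⟩
  obtain ⟨k, rfl | rfl⟩ := Nat.even_or_odd' j
  · simpa using Ioo_subset_alternatingUnion k hmid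
  · simpa [Nat.even_add_one] using Ioo_subset_compl_alternatingUnion hb.antitone k hmid

theorem not_boundedVariationOn_indicator_alternatingUnion (hb : StrictAnti b) :
    ¬ BoundedVariationOn ((alternatingUnion b).indicator fun _ => (1 : ℝ)) univ := by
  have hmem := midpoint_mem_alternatingUnion_iff hb
  refine fun hBV => hBV (eVariationOn_eq_top_of_antitone (u := fun j => (b (j + 1) + b j) / 2)
    (fun i j hij => ?_) (fun _ => mem_univ _) one_ne_zero fun j => ?_)
  · linarith [hb.antitone hij, hb.antitone (Nat.succ_le_succ hij)]
  · rcases Nat.even_or_odd j with hj | hj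
    · rw [indicator_of_mem ((hmem j).2 hj),
        indicator_of_notMem (mt (hmem _).1 (Nat.not_even_iff_odd.2 hj.add_one))]
      simp [edist_dist]
    · rw [indicator_of_notMem (mt (hmem j).1 (Nat.not_even_iff_odd.2 hj)),
        indicator_of_mem ((hmem _).2 hj.add_one)]
      simp [edist_dist]

theorem ofReal_sum_le_mul_perR_alternatingUnion (hb : Antitone b) {s : ℝ} (hs₀ : -1 ≤ s)
    (hs₁ : s < 1) {ℓ : ℕ → ℝ} (hℓ : ∀ k, 0 ≤ ℓ k) (hℓ₁ : ∀ k, ℓ k ≤ b (2 * k) - b (2 * k + 1))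
    (hℓ₂ : ∀ k, ℓ k ≤ b (2 * k + 1) - b (2 * k + 2)) (N : ℕ) :
    ENNReal.ofReal (∑ k ∈ Finset.range N, 2 ^ (-(1 + s)) * ℓ k ^ (1 - s)) ≤
      ENNReal.ofReal (1 - s) * perR s (alternatingUnion b) := by
  rw [ENNReal.ofReal_sum_of_nonneg (fun k _ => by have := hℓ k; positivity),
    perR_eq_fracInteraction]
  calc ∑ k ∈ Finset.range N, ENNReal.ofReal (2 ^ (-(1 + s)) * ℓ k ^ (1 - s))
      ≤ ∑ k ∈ Finset.range N, ENNReal.ofReal (1 - s) *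
          fracInteraction s (Ioo (b (2 * k + 1)) (b (2 * k))) (alternatingUnion b)ᶜ := by
        refine Finset.sum_le_sum fun k _ =>
          (ofReal_le_mul_fracInteraction_Ioo (q := b (2 * k + 1)) hs₀ hs₁ (hℓ k)).trans
          (mul_le_mul_right (fracInteraction_mono ?_ ?_) _)
        · exact Ioo_subset_Ioo_right (by linarith [hℓ₁ k])
        · exact (Ioo_subset_Ioo_left (by linarith [hℓ₂ k])).trans
            (Ioo_subset_compl_alternatingUnion hb k)
    _ = ENNReal.ofReal (1 - s) * ∑ k ∈ Finset.range N,
          fracInteraction s (Ioo (b (2 * k + 1)) (b (2 * k))) (alternatingUnion b)ᶜ :=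
        (Finset.mul_sum _ _ _).symm
    _ ≤ _ := mul_le_mul_right (sum_fracInteraction_le
        ((pairwise_disjoint_Ioo_alternatingUnion hb).set_pairwise _)
        (fun _ _ => measurableSet_Ioo) fun k _ => Ioo_subset_alternatingUnion k) _

theorem tendsto_mul_perR_alternatingUnion (hb : StrictAnti b) :
    Tendsto (fun s => ENNReal.ofReal (1 - s) * perR s (alternatingUnion b)) (𝓝[<] 1) (𝓝 ∞) := by
  set ℓ : ℕ → ℝ := fun k => min (b (2 * k) - b (2 * k + 1)) (b (2 * k + 1) - b (2 * k + 2))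
  have hℓ : ∀ k, 0 < ℓ k := fun k => lt_min (sub_pos.2 (hb (by omega))) (sub_pos.2 (hb (by omega)))
  refine ENNReal.tendsto_nhds_top_iff_nat.2 fun n => ?_
  have hcont : Continuous fun s : ℝ =>
      ∑ k ∈ Finset.range (4 * n + 4), (2 : ℝ) ^ (-(1 + s)) * ℓ k ^ (1 - s) := by
    fun_prop (disch := first | positivity | exact (hℓ _).ne')
  have hlim := (hcont.tendsto 1).mono_left (nhdsWithin_le_nhds (s := Iio 1))
  have hval : ∑ k ∈ Finset.range (4 * n + 4), (2 : ℝ) ^ (-(1 + 1 : ℝ)) * ℓ k ^ (1 - 1 : ℝ) =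
      n + 1 := by
    norm_num [Real.rpow_neg]
    ring
  rw [hval] at hlim
  filter_upwards [hlim.eventually_const_lt (lt_add_one (n : ℝ)),
    Ioo_mem_nhdsLT (by norm_num : (-1 : ℝ) < 1)] with s hs hs'
  calc (n : ℝ≥0∞) = ENNReal.ofReal n := (ENNReal.ofReal_natCast n).symm
    _ < ENNReal.ofReal (∑ k ∈ Finset.range (4 * n + 4), 2 ^ (-(1 + s)) * ℓ k ^ (1 - s)) :=
        (ENNReal.ofReal_lt_ofReal_iff_of_nonneg n.cast_nonneg).2 hs
    _ ≤ _ := ofReal_sum_le_mul_perR_alternatingUnion hb.antitone hs'.1.le hs'.2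
        (fun k => (hℓ k).le) (fun k => min_le_left _ _) (fun k => min_le_right _ _) _

end AlternatingUnion

/-- For `0 < a < 1` and `E = ⋃_k (a^{2k+1}, a^{2k})`, the quantity
`(1-s) P_s(E)` tends to `+∞` as `s → 1⁻`; in particular the characteristic function
of `E` is not of bounded variation on `ℝ`. -/
theorem perR_union_Ioo_blowup (a : ℝ) (ha : a ∈ Set.Ioo (0 : ℝ) 1) :
    (∀ M : ℝ, 0 < M → ∃ s₀ ∈ Set.Ioo (0 : ℝ) 1, ∀ s : ℝ, s₀ < s → s < 1 →
      ENNReal.ofReal M <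
        ENNReal.ofReal (1 - s) * perR s (⋃ k : ℕ, Set.Ioo (a ^ (2 * k + 1)) (a ^ (2 * k)))) ∧
    ¬ BoundedVariationOn
        (Set.indicator (⋃ k : ℕ, Set.Ioo (a ^ (2 * k + 1)) (a ^ (2 * k))) fun _ => (1 : ℝ))
        Set.univ := by
  have hb : StrictAnti (a ^ · : ℕ → ℝ) := pow_right_strictAnti₀ ha.1 ha.2
  refine ⟨fun M _ => ?_, not_boundedVariationOn_indicator_alternatingUnion hb⟩
  obtain ⟨s₁, hs₁, hsub⟩ := mem_nhdsLT_iff_exists_Ioo_subset.1 <|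
    (tendsto_mul_perR_alternatingUnion hb).eventually_const_lt ENNReal.ofReal_lt_top
  refine ⟨max s₁ (1 / 2), ⟨by positivity, max_lt hs₁ (by norm_num)⟩, fun s hs hs1 => ?_⟩
  exact hsub ⟨(le_max_left _ _).trans_lt hs, hs1⟩
end
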